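/- Let v ≥ 1 and k ≥ 0 be integers, set d = v(k+1) − 1, and let Λ be a finite subgroup of (ℝ/ℤ)^{d+1} having δ-polynomial 1 + t^{k+1} + t^{2(k+1)} + ⋯ + t^{(v−1)(k+1)}. Then Λ is the cyclic subgroup of (ℝ/ℤ)^{d+1} generated by the element (1/v, 1/v, …, 1/v). -/

import Mathlib

open scoped BigOperators

local instance : Fact ((0:ℝ) < 1) := ⟨one_pos⟩

noncomputable def fracR (x : AddCircle (1:ℝ)) : ℝ :=
  ((AddCircle.equivIco 1 0) x : ℝ)

noncomputable def ht {ι : Type*} [Fintype ι] (x : ι → AddCircle (1:ℝ)) : ℝ :=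
  ∑ i, fracR (x i)

/-- `Λ` has δ-polynomial `1 + t^step + t^(2*step) + ⋯ + t^((v-1)*step)` :
the height map is a bijection from `Λ` onto `{j*step : 0 ≤ j ≤ v-1}`. -/
def HasDeltaPoly {ι : Type*} [Fintype ι] (v step : ℕ)
    (Λ : Set (ι → AddCircle (1:ℝ))) : Prop :=
  Set.BijOn ht Λ {y : ℝ | ∃ j : ℕ, j < v ∧ y = (j : ℝ) * (step : ℝ)}

def NonPyramidal {ι : Type*} [Fintype ι] (Λ : Set (ι → AddCircle (1:ℝ))) : Prop :=
  ∀ i : ι, ∃ x ∈ Λ, x i ≠ 0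

/-! The element `(1/v, …, 1/v)` has height `(d+1)/v = k+1`, and its multiples `j • (1/v, …, 1/v)`,
`j < v`, have the heights `j(k+1)`; since the height is injective on `Λ`, it suffices to show that
this element lies in `Λ`. As `ht λ + ht (-λ)` is the number of nonzero coordinates of `λ`, summing
over `Λ` gives `2 ∑ ht ≤ (v-1)(d+1)`; the δ-polynomial gives `2 ∑ ht = (k+1)v(v-1)`, which is the
same number, so every nonzero `λ ∈ Λ` has no zero coordinate. Since `|Λ| = v`, all coordinates
lie in `(1/v)ℤ/ℤ`, so each nonzero one is at least `1/v`; the element of height `k+1` therefore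
has all coordinates equal to `1/v`. -/

open Finset

lemma fracR_coe (x : ℝ) : fracR (x : AddCircle (1:ℝ)) = Int.fract x := by
  simp [fracR, AddCircle.coe_equivIco_mk_apply]

lemma coe_fracR (z : AddCircle (1:ℝ)) : ((fracR z : ℝ) : AddCircle (1:ℝ)) = z := by
  induction z using QuotientAddGroup.induction_on with
  | H x =>
    rw [fracR_coe, Int.fract, AddCircle.coe_sub, sub_eq_self, AddCircle.coe_eq_zero_iff]
    exact ⟨⌊x⌋, by simp⟩

lemma fracR_nonneg (z : AddCircle (1:ℝ)) : 0 ≤ fracR z := by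
  induction z using QuotientAddGroup.induction_on with
  | H x => rw [fracR_coe]; exact Int.fract_nonneg x

lemma fracR_coe_of_mem_Ico {r : ℝ} (hr : r ∈ Set.Ico 0 1) :
    fracR (r : AddCircle (1:ℝ)) = r := by
  rw [fracR_coe, Int.fract_eq_self.mpr hr]

lemma fracR_zero : fracR (0 : AddCircle (1:ℝ)) = 0 := by
  simpa using fracR_coe_of_mem_Ico (r := 0) (by simp)

lemma fracR_eq_zero_iff {z : AddCircle (1:ℝ)} : fracR z = 0 ↔ z = 0 := by
  refine ⟨fun h => ?_, fun h => h ▸ fracR_zero⟩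
  rw [← coe_fracR z, h, AddCircle.coe_zero]

lemma fracR_add_fracR_neg (z : AddCircle (1:ℝ)) :
    fracR z + fracR (-z) = if z = 0 then 0 else 1 := by
  induction z using QuotientAddGroup.induction_on with
  | H x =>
    split_ifs with h
    · simp [h, fracR_zero]
    · have hx : Int.fract x ≠ 0 := by rwa [← fracR_coe, Ne, fracR_eq_zero_iff]
      rw [← AddCircle.coe_neg, fracR_coe, fracR_coe, Int.fract_neg hx]
      ring

lemma one_div_le_fracR_of_nsmul_eq_zero {v : ℕ} (hv : 0 < v) {z : AddCircle (1:ℝ)}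
    (hz : v • z = 0) (hz0 : z ≠ 0) : 1 / (v : ℝ) ≤ fracR z := by
  obtain ⟨m, hm⟩ : ∃ m : ℤ, (m : ℝ) = v * fracR z := by
    rw [← coe_fracR z, ← AddCircle.coe_nsmul, AddCircle.coe_eq_zero_iff] at hz
    simpa using hz
  have hpos : 0 < fracR z := (fracR_nonneg z).lt_of_ne' (fracR_eq_zero_iff.not.mpr hz0)
  have hm_pos : (0 : ℤ) < m := by exact_mod_cast hm ▸ (by positivity : (0 : ℝ) < v * fracR z)
  have hm1 : (1 : ℝ) ≤ m := by exact_mod_cast hm_pos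
  rw [div_le_iff₀' (by positivity)]
  linarith

section Height

variable {ι : Type*} [Fintype ι]

lemma ht_zero : ht (0 : ι → AddCircle (1:ℝ)) = 0 := by
  simp [ht, fracR_zero]

lemma ht_add_ht_neg (x : ι → AddCircle (1:ℝ)) :
    ht x + ht (-x) = #{i | x i ≠ 0} := by
  rw [ht, ht, ← sum_add_distrib, card_filter, Nat.cast_sum]
  refine sum_congr rfl fun i _ => ?_
  rw [Pi.neg_apply, fracR_add_fracR_neg]
  split_ifs <;> simp_all

lemma ht_const {r : ℝ} (hr : r ∈ Set.Ico 0 1) :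
    ht (fun _ : ι => (r : AddCircle (1:ℝ))) = Fintype.card ι * r := by
  simp [ht, fracR_coe_of_mem_Ico hr]

lemma ht_nsmul_const {v j : ℕ} (hj : j < v) :
    ht (j • fun _ : ι => ((1 / (v:ℝ) : ℝ) : AddCircle (1:ℝ))) = Fintype.card ι * (j / v) := by
  have hv : (0:ℝ) < v := Nat.cast_pos.mpr ((Nat.zero_le j).trans_lt hj)
  have hjv : (j / v : ℝ) ∈ Set.Ico 0 1 :=
    ⟨by positivity, (div_lt_one hv).mpr (by exact_mod_cast hj)⟩
  rw [← ht_const hjv]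
  congr 1
  funext
  simp only [Pi.smul_apply, ← AddCircle.coe_nsmul, nsmul_eq_mul, mul_one_div]

lemma forall_ne_zero_of_two_mul_sum_ht_eq {F : Finset (ι → AddCircle (1:ℝ))}
    (hneg : ∀ x ∈ F, -x ∈ F) (h0 : 0 ∈ F)
    (hsum : 2 * ∑ x ∈ F, ht x = (#F - 1 : ℝ) * Fintype.card ι) :
    ∀ x ∈ F, x ≠ 0 → ∀ i, x i ≠ 0 := by
  classical
  set bound : (ι → AddCircle (1:ℝ)) → ℝ := fun x => if x = 0 then 0 else Fintype.card ι
  have hle : ∀ x ∈ F, ht x + ht (-x) ≤ bound x := by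
    intro x _
    rw [ht_add_ht_neg]
    by_cases hx : x = 0
    · simp [bound, hx]
    · simpa [bound, hx] using card_le_univ _
  have hsum_neg : ∑ x ∈ F, ht (-x) = ∑ x ∈ F, ht x :=
    sum_nbij' Neg.neg Neg.neg hneg hneg (fun x _ => neg_neg x) (fun x _ => neg_neg x)
      (fun _ _ => rfl)
  have hsum_bound : ∑ x ∈ F, bound x = (#F - 1 : ℝ) * Fintype.card ι := by
    rw [← add_sum_erase F _ h0, sum_congr rfl fun x hx => if_neg (ne_of_mem_erase hx),
      sum_const, card_erase_of_mem h0, nsmul_eq_mul, Nat.cast_pred (card_pos.mpr ⟨0, h0⟩)]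
    simp [bound]
  have heq := (sum_eq_sum_iff_of_le hle).mp <| by
    rw [sum_add_distrib, hsum_neg, hsum_bound, ← hsum]
    ring
  intro x hx hx0
  have hsupp := heq x hx
  rw [ht_add_ht_neg] at hsupp
  simp only [bound, if_neg hx0, ← card_univ] at hsupp
  exact fun i => card_filter_eq_iff.mp (by exact_mod_cast hsupp) i (mem_univ i)

lemma eq_const_of_ht_eq {v : ℕ} (hv : 0 < v) {x : ι → AddCircle (1:ℝ)} (hx : v • x = 0)
    (hx0 : ∀ i, x i ≠ 0) (hht : ht x = Fintype.card ι / v) :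
    x = fun _ => ((1 / (v:ℝ) : ℝ) : AddCircle (1:ℝ)) := by
  have hle : ∀ i ∈ (univ : Finset ι), 1 / (v:ℝ) ≤ fracR (x i) := fun i _ =>
    one_div_le_fracR_of_nsmul_eq_zero hv (by simpa using congrFun hx i) (hx0 i)
  have heq := (sum_eq_sum_iff_of_le hle).mp <| by
    rw [← ht, hht, sum_const, card_univ, nsmul_eq_mul, mul_one_div]
  funext i
  rw [← coe_fracR (x i), ← heq i (mem_univ i)]

end Height

lemma two_mul_sum_range_mul (v : ℕ) (c : ℝ) :
    2 * ∑ j ∈ range v, (j : ℝ) * c = (v - 1 : ℝ) * v * c := by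
  induction v with
  | zero => simp
  | succ n ih => rw [sum_range_succ, mul_add, ih]; push_cast; ring

section DeltaPoly

variable {ι : Type*} [Fintype ι] {v step : ℕ} {F : Finset (ι → AddCircle (1:ℝ))}

lemma HasDeltaPoly.bijOn_image_range (h : HasDeltaPoly v step (F : Set (ι → AddCircle (1:ℝ)))) :
    Set.BijOn ht (F : Set (ι → AddCircle (1:ℝ)))
      ((range v).image fun j : ℕ => (j : ℝ) * step : Finset ℝ) := by
  have himage : (((range v).image fun j : ℕ => (j : ℝ) * step : Finset ℝ) : Set ℝ) =
      {y : ℝ | ∃ j : ℕ, j < v ∧ y = (j : ℝ) * (step : ℝ)} := by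
    ext y
    simp [eq_comm]
  rw [himage]
  exact h

lemma HasDeltaPoly.card_eq (h : HasDeltaPoly v step (F : Set (ι → AddCircle (1:ℝ))))
    (hstep : 0 < step) : #F = v := by
  rw [h.bijOn_image_range.finsetCard_eq, card_image_of_injective _ ?_, card_range]
  intro a b hab
  exact_mod_cast mul_right_cancel₀ (by positivity) hab

lemma HasDeltaPoly.sum_ht_eq (h : HasDeltaPoly v step (F : Set (ι → AddCircle (1:ℝ))))
    (hstep : 0 < step) : ∑ x ∈ F, ht x = ∑ j ∈ range v, (j : ℝ) * step := by
  have hb := h.bijOn_image_range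
  rw [sum_nbij (g := fun y : ℝ => y) ht hb.mapsTo hb.injOn hb.surjOn fun _ _ => rfl, sum_image]
  intro a _ b _ hab
  exact_mod_cast mul_right_cancel₀ (by positivity) hab

variable {Λ : AddSubgroup (ι → AddCircle (1:ℝ))}

lemma HasDeltaPoly.nsmul_eq_zero (hfin : (Λ : Set (ι → AddCircle (1:ℝ))).Finite)
    (hΛ : HasDeltaPoly v step (Λ : Set (ι → AddCircle (1:ℝ))))
    (hstep : 0 < step) {x : ι → AddCircle (1:ℝ)} (hx : x ∈ Λ) : v • x = 0 := by
  rw [← hfin.coe_toFinset] at hΛ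
  have hcard : Nat.card Λ = v := (Nat.card_eq_card_finite_toFinset hfin).trans (hΛ.card_eq hstep)
  simpa [hcard] using congrArg Subtype.val (card_nsmul_eq_zero' (x := (⟨x, hx⟩ : Λ)))

lemma HasDeltaPoly.forall_ne_zero (hfin : (Λ : Set (ι → AddCircle (1:ℝ))).Finite)
    (hΛ : HasDeltaPoly v step (Λ : Set (ι → AddCircle (1:ℝ))))
    (hι : Fintype.card ι = v * step) (hstep : 0 < step) {x : ι → AddCircle (1:ℝ)} (hx : x ∈ Λ)
    (hx0 : x ≠ 0) (i : ι) : x i ≠ 0 := by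
  have hmem : ∀ {x}, x ∈ hfin.toFinset ↔ x ∈ Λ := hfin.mem_toFinset
  rw [← hfin.coe_toFinset] at hΛ
  refine forall_ne_zero_of_two_mul_sum_ht_eq (fun y hy => hmem.mpr (neg_mem (hmem.mp hy)))
    (hmem.mpr Λ.zero_mem) ?_ x (hmem.mpr hx) hx0 i
  rw [hΛ.sum_ht_eq hstep, two_mul_sum_range_mul, hΛ.card_eq hstep, hι]
  push_cast
  ring

lemma HasDeltaPoly.const_mem (hfin : (Λ : Set (ι → AddCircle (1:ℝ))).Finite)
    (hΛ : HasDeltaPoly v step (Λ : Set (ι → AddCircle (1:ℝ))))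
    (hι : Fintype.card ι = v * step) (hstep : 0 < step) (hv : 1 ≤ v) :
    (fun _ => ((1 / (v:ℝ) : ℝ) : AddCircle (1:ℝ))) ∈ Λ := by
  rcases hv.eq_or_lt with rfl | hv2
  · convert Λ.zero_mem
    simp
  obtain ⟨x, hx, hxht⟩ := hΛ.surjOn ⟨1, hv2, rfl⟩
  have hx0 : x ≠ 0 := by
    rintro rfl
    rw [ht_zero, Nat.cast_one, one_mul] at hxht
    exact hstep.ne (by exact_mod_cast hxht)
  have hxht' : ht x = Fintype.card ι / v := by
    rw [hxht, hι]
    field_simp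
    push_cast
    ring
  have hx_eq := eq_const_of_ht_eq hv (hΛ.nsmul_eq_zero hfin hstep hx)
    (hΛ.forall_ne_zero hfin hι hstep hx hx0) hxht'
  rwa [← hx_eq]

theorem HasDeltaPoly.eq_zmultiples (hfin : (Λ : Set (ι → AddCircle (1:ℝ))).Finite)
    (hΛ : HasDeltaPoly v step (Λ : Set (ι → AddCircle (1:ℝ))))
    (hι : Fintype.card ι = v * step) (hstep : 0 < step) (hv : 1 ≤ v) :
    Λ = AddSubgroup.zmultiples (fun _ => ((1 / (v:ℝ) : ℝ) : AddCircle (1:ℝ))) := by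
  have hg := hΛ.const_mem hfin hι hstep hv
  refine le_antisymm (fun x hx => ?_) (AddSubgroup.zmultiples_le.mpr hg)
  obtain ⟨j, hj, hxj⟩ := hΛ.mapsTo hx
  have hx_eq : x = j • fun _ => ((1 / (v:ℝ) : ℝ) : AddCircle (1:ℝ)) := by
    refine hΛ.injOn hx (Λ.nsmul_mem hg j) ?_
    rw [hxj, ht_nsmul_const hj, hι]
    field_simp
    push_cast
    ring
  exact AddSubgroup.mem_zmultiples_iff.mpr ⟨j, by rw [hx_eq, natCast_zsmul]⟩

end DeltaPoly

theorem stmt_3 (v k : ℕ) (hv : 1 ≤ v)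
    (Λ : AddSubgroup (Fin (v*(k+1)) → AddCircle (1:ℝ)))
    (hfin : (Λ : Set (Fin (v*(k+1)) → AddCircle (1:ℝ))).Finite)
    (hΛ : HasDeltaPoly v (k+1) (Λ : Set (Fin (v*(k+1)) → AddCircle (1:ℝ)))) :
    Λ = AddSubgroup.zmultiples
      (fun _ : Fin (v*(k+1)) => ((1 / (v:ℝ) : ℝ) : AddCircle (1:ℝ))) :=
  hΛ.eq_zmultiples hfin (Fintype.card_fin _) k.succ_pos hv
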